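/- Let X be a compact Hausdorff space and 𝒜 a function algebra on X. If u ∈ C(X, ℂ) is such that for every maximal set of antisymmetry A of 𝒜 there exists v ∈ 𝒜 with u(x) = v(x) for all x ∈ A, then u ∈ 𝒜. -/
import Mathlib


variable {X : Type*} [TopologicalSpace X] [CompactSpace X] [T2Space X]

/-- A function algebra on a compact Hausdorff space `X`: a closed subalgebra of `C(X, ℂ)`
(it contains the constants, being a subalgebra) which separates the points of `X`. -/
def IsFunctionAlgebra (𝒜 : Subalgebra ℂ C(X, ℂ)) : Prop :=
  IsClosed (𝒜 : Set C(X, ℂ)) ∧ ∀ x y : X, x ≠ y → ∃ u ∈ 𝒜, u x ≠ u y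

/-- `S` is a set of antisymmetry of `𝒜` if every `u ∈ 𝒜` which is real valued on `S`
is constant on `S`. -/
def IsAntisymmetrySet (𝒜 : Subalgebra ℂ C(X, ℂ)) (S : Set X) : Prop :=
  ∀ u ∈ 𝒜, (∀ x ∈ S, (u x).im = 0) → ∀ x ∈ S, ∀ y ∈ S, u x = u y

/-- A maximal set of antisymmetry: a set of antisymmetry not properly contained in any
other set of antisymmetry. -/
def IsMaximalAntisymmetrySet (𝒜 : Subalgebra ℂ C(X, ℂ)) (S : Set X) : Prop :=
  IsAntisymmetrySet 𝒜 S ∧ ∀ S', IsAntisymmetrySet 𝒜 S' → S ⊆ S' → S' = S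

/-- Bernoulli-type estimate: for `0 ≤ t ≤ 1/3`, `1 - (1-t^n)^(2^n) ≤ (3/4)^n`. -/
lemma bishop_aux_low {t : ℝ} (h0 : 0 ≤ t) (h3 : t ≤ 1/3) (n : ℕ) :
    1 - (1 - t ^ n) ^ 2 ^ n ≤ (3/4 : ℝ) ^ n := by
  have hs0 : 0 ≤ t ^ n := pow_nonneg h0 n
  have hB : 1 + (2 ^ n : ℕ) * (-(t ^ n)) ≤ (1 + -(t ^ n)) ^ 2 ^ n := by
    apply one_add_mul_le_pow
    have : t ^ n ≤ 1 := pow_le_one₀ h0 (by linarith)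
    linarith
  have h2t : (2 * t) ^ n ≤ (2/3 : ℝ) ^ n := by
    apply pow_le_pow_left₀ (by linarith) (by linarith)
  have h23 : (2/3 : ℝ) ^ n ≤ (3/4 : ℝ) ^ n := by
    apply pow_le_pow_left₀ (by norm_num) (by norm_num)
  have hcast : ((2 ^ n : ℕ) : ℝ) * t ^ n = (2 * t) ^ n := by
    push_cast; rw [mul_pow]
  simp only [mul_neg, ← sub_eq_add_neg] at hB
  linarith [hB, h2t, h23, hcast.le, hcast.ge]

/-- For `2/3 ≤ t ≤ 1`, `(1-t^n)^(2^n) ≤ (3/4)^n`. -/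
lemma bishop_aux_high {t : ℝ} (h3 : 2/3 ≤ t) (h1 : t ≤ 1) (n : ℕ) :
    (1 - t ^ n) ^ 2 ^ n ≤ (3/4 : ℝ) ^ n := by
  set s := t ^ n with hs
  have hs0 : 0 ≤ s := pow_nonneg (by linarith) n
  have hs1 : s ≤ 1 := pow_le_one₀ (by linarith) h1
  have hp0 : (0:ℝ) ≤ (1 - s) ^ 2 ^ n := pow_nonneg (by linarith) _
  have hB : 1 + ((2 ^ n : ℕ) : ℝ) * s ≤ (1 + s) ^ 2 ^ n := one_add_mul_le_pow (by linarith) _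
  have hprod : (1 - s) ^ 2 ^ n * (1 + s) ^ 2 ^ n ≤ 1 := by
    rw [← mul_pow]
    have : (1 - s) * (1 + s) ≤ 1 := by nlinarith
    calc ((1 - s) * (1 + s)) ^ 2 ^ n ≤ 1 ^ 2 ^ n :=
          pow_le_pow_left₀ (by nlinarith) this _
      _ = 1 := one_pow _
  have hkey : (1 - s) ^ 2 ^ n * (((2 ^ n : ℕ) : ℝ) * s) ≤ 1 := by
    calc (1 - s) ^ 2 ^ n * (((2 ^ n : ℕ) : ℝ) * s)
        ≤ (1 - s) ^ 2 ^ n * (1 + s) ^ 2 ^ n := by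
          apply mul_le_mul_of_nonneg_left _ hp0
          calc ((2 ^ n : ℕ) : ℝ) * s ≤ 1 + ((2 ^ n : ℕ) : ℝ) * s := by linarith
            _ ≤ (1 + s) ^ 2 ^ n := hB
      _ ≤ 1 := hprod
  have hms : ((4/3 : ℝ)) ^ n ≤ ((2 ^ n : ℕ) : ℝ) * s := by
    have h : ((2 ^ n : ℕ) : ℝ) * s = (2 * t) ^ n := by push_cast; rw [mul_pow]
    rw [h]
    apply pow_le_pow_left₀ (by norm_num) (by linarith)
  have h43 : (0:ℝ) < (4/3 : ℝ) ^ n := by positivity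
  have hfin : (1 - s) ^ 2 ^ n * (4/3 : ℝ) ^ n ≤ 1 := by
    calc (1 - s) ^ 2 ^ n * (4/3 : ℝ) ^ n ≤ (1 - s) ^ 2 ^ n * (((2 ^ n : ℕ) : ℝ) * s) :=
          mul_le_mul_of_nonneg_left hms hp0
      _ ≤ 1 := hkey
  have hmul : (3/4 : ℝ) ^ n * (4/3 : ℝ) ^ n = 1 := by
    rw [← mul_pow]; norm_num
  nlinarith [hfin, hmul, h43]

/-- Bishop's theorem: if `u ∈ C(X, ℂ)` agrees on every maximal set of antisymmetry of `𝒜`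
with some member of `𝒜`, then `u ∈ 𝒜`. -/
theorem mem_of_restrict_mem_on_maximal_antisymmetrySets
    (𝒜 : Subalgebra ℂ C(X, ℂ)) (h𝒜 : IsFunctionAlgebra 𝒜) (u : C(X, ℂ))
    (h : ∀ M : Set X, IsMaximalAntisymmetrySet 𝒜 M →
      ∃ v ∈ 𝒜, ∀ x ∈ M, u x = v x) :
    u ∈ 𝒜 := by
  classical
  obtain ⟨hclosed, -⟩ := h𝒜
  rcases isEmpty_or_nonempty X with hX | hX
  · have hu : u = 0 := ContinuousMap.ext fun x => isEmptyElim x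
    rw [hu]; exact zero_mem 𝒜
  have hKne : (𝒜 : Set C(X, ℂ)).Nonempty := ⟨0, zero_mem 𝒜⟩
  set d : ℝ := Metric.infDist u (𝒜 : Set C(X, ℂ)) with hd_def
  suffices hdle : d ≤ 0 by
    have hd0 : d = 0 := le_antisymm hdle Metric.infDist_nonneg
    exact (hclosed.mem_iff_infDist_zero hKne).2 hd0
  by_contra hdpos'
  push_neg at hdpos'
  have hdpos : 0 < d := hdpos'
  -- the Machado family: closed nonempty sets on which `u` stays `d`-far from `𝒜`
  set F : Set (Set X) :=
    {S | S.Nonempty ∧ IsClosed S ∧ ∀ g ∈ 𝒜, ∃ x ∈ S, d ≤ ‖u x - g x‖} with hF_def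
  have hXF : (Set.univ : Set X) ∈ F := by
    refine ⟨Set.univ_nonempty, isClosed_univ, fun g hg => ?_⟩
    obtain ⟨x, -, hx⟩ := isCompact_univ.exists_isMaxOn Set.univ_nonempty
      ((u.continuous.sub g.continuous).norm.continuousOn)
    refine ⟨x, Set.mem_univ x, ?_⟩
    have h1 : d ≤ dist u g := Metric.infDist_le_dist_of_mem hg
    rw [dist_eq_norm] at h1
    refine h1.trans ?_
    rw [ContinuousMap.norm_le _ (norm_nonneg _)]
    intro y
    simpa using hx (Set.mem_univ y)
  have hFchain : ∀ c ⊆ F, IsChain (· ⊆ ·) c → c.Nonempty →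
      ∃ lb ∈ F, ∀ s ∈ c, lb ⊆ s := by
    intro c hcF hc hcne
    haveI : Nonempty c := hcne.to_subtype
    have hdir : ∀ A : Set X, Directed (· ⊇ ·) (fun i : c => (i : Set X) ∩ A) := by
      intro A i j
      rcases hc.total i.2 j.2 with hij | hij
      · exact ⟨i, Set.Subset.rfl, Set.inter_subset_inter_left A hij⟩
      · exact ⟨j, Set.inter_subset_inter_left A hij, Set.Subset.rfl⟩
    have key : ∀ A : Set X, IsClosed A → (∀ s ∈ c, (s ∩ A).Nonempty) →
        (⋂₀ c ∩ A).Nonempty := by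
      intro A hA hne
      have h1 : (⋂ i : c, ((i : Set X) ∩ A)).Nonempty := by
        apply IsCompact.nonempty_iInter_of_directed_nonempty_isCompact_isClosed
          _ (hdir A)
        · intro i; exact hne i i.2
        · intro i; exact (((hcF i.2).2.1).inter hA).isCompact
        · intro i; exact ((hcF i.2).2.1).inter hA
      obtain ⟨x, hx⟩ := h1
      simp only [Set.mem_iInter, Set.mem_inter_iff] at hx
      exact ⟨x, Set.mem_sInter.2 fun s hs => (hx ⟨s, hs⟩).1,
        (hx (Classical.arbitrary _)).2⟩
    refine ⟨⋂₀ c, ⟨?_, ?_, ?_⟩, fun s hs => Set.sInter_subset_of_mem hs⟩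
    · have := key Set.univ isClosed_univ fun s hs => by simpa using (hcF hs).1
      exact this.imp fun x hx => hx.1
    · exact isClosed_sInter fun s hs => (hcF hs).2.1
    · intro g hg
      have hAcl : IsClosed {x : X | d ≤ ‖u x - g x‖} :=
        isClosed_le continuous_const ((u.continuous.sub g.continuous).norm)
      obtain ⟨x, hx1, hx2⟩ := key _ hAcl fun s hs => by
        obtain ⟨x, hxs, hxd⟩ := (hcF hs).2.2 g hg
        exact ⟨x, hxs, hxd⟩
      exact ⟨x, hx1, hx2⟩
  obtain ⟨E, -, hEmin⟩ := zorn_superset_nonempty F hFchain Set.univ hXF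
  obtain ⟨hEne, hEcl, hEd⟩ := hEmin.1
  -- the minimal set `E` is a set of antisymmetry
  have hEanti : IsAntisymmetrySet 𝒜 E := by
    intro k hk hkim
    by_contra hcon
    push_neg at hcon
    obtain ⟨x₀, hx₀, y₀, hy₀, hxy⟩ := hcon
    have hEcomp : IsCompact E := hEcl.isCompact
    set f : X → ℝ := fun x => (k x).re with hf
    have hfc : Continuous f := Complex.continuous_re.comp k.continuous
    obtain ⟨p, hpE, hp'⟩ := hEcomp.exists_isMaxOn hEne hfc.continuousOn
    obtain ⟨q, hqE, hq'⟩ := hEcomp.exists_isMinOn hEne hfc.continuousOn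
    have hp : ∀ x ∈ E, f x ≤ f p := fun x hx => hp' hx
    have hq : ∀ x ∈ E, f q ≤ f x := fun x hx => hq' hx
    set a : ℝ := f q with ha
    set b : ℝ := f p with hb
    have hkre : ∀ x ∈ E, k x = ((f x : ℝ) : ℂ) := fun x hx =>
      Complex.ext (by simp [hf]) (by simpa using hkim x hx)
    have hab : a < b := by
      have h5 : f x₀ ≠ f y₀ := by
        intro hfe
        exact hxy (by rw [hkre x₀ hx₀, hkre y₀ hy₀, hfe])
      have h1 := hq x₀ hx₀; have h2 := hq y₀ hy₀
      have h3 := hp x₀ hx₀; have h4 := hp y₀ hy₀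
      rcases lt_or_gt_of_ne h5 with hlt | hlt <;> [skip; skip] <;> linarith
    have hba : 0 < b - a := sub_pos.2 hab
    set t : X → ℝ := fun x => (f x - a) / (b - a) with ht
    have htc : Continuous t := (hfc.sub continuous_const).div_const _
    have ht01 : ∀ x ∈ E, 0 ≤ t x ∧ t x ≤ 1 := by
      intro x hx
      constructor
      · apply div_nonneg _ hba.le
        have := hq x hx; linarith
      · rw [div_le_one hba]
        have := hp x hx; linarith
    have htp : t p = 1 := by
      show (f p - a) / (b - a) = 1
      rw [← hb]; exact div_self hba.ne'
    have htq : t q = 0 := by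
      show (f q - a) / (b - a) = 0
      rw [← ha]; simp
    -- the normalized element of 𝒜
    set k' : C(X, ℂ) := algebraMap ℂ C(X, ℂ) (((b - a : ℝ) : ℂ))⁻¹ *
      (k - algebraMap ℂ C(X, ℂ) ((a : ℝ) : ℂ)) with hk'
    have hk'mem : k' ∈ 𝒜 := mul_mem (𝒜.algebraMap_mem _) (sub_mem hk (𝒜.algebraMap_mem _))
    have hbac : ((b - a : ℝ) : ℂ) ≠ 0 := Complex.ofReal_ne_zero.mpr hba.ne'
    have hk'E : ∀ x ∈ E, k' x = ((t x : ℝ) : ℂ) := by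
      intro x hx
      have h1 : k' x = (((b - a : ℝ) : ℂ))⁻¹ * (k x - ((a : ℝ) : ℂ)) := by
        simp [hk']
      rw [h1, hkre x hx]
      show _ = (((f x - a) / (b - a) : ℝ) : ℂ)
      push_cast
      field_simp
    -- the two proper closed subsets
    set E₁ : Set X := E ∩ {x | t x ≤ 2/3} with hE₁
    set E₂ : Set X := E ∩ {x | 1/3 ≤ t x} with hE₂
    have hE₁cl : IsClosed E₁ := hEcl.inter (isClosed_le htc continuous_const)
    have hE₂cl : IsClosed E₂ := hEcl.inter (isClosed_le continuous_const htc)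
    have hqE₁ : q ∈ E₁ := ⟨hqE, by simp only [Set.mem_setOf_eq, htq]; norm_num⟩
    have hpE₂ : p ∈ E₂ := ⟨hpE, by simp only [Set.mem_setOf_eq, htp]; norm_num⟩
    have hpE₁ : p ∉ E₁ := by
      intro hmem
      have h23 : t p ≤ 2/3 := hmem.2
      rw [htp] at h23; norm_num at h23
    have hqE₂ : q ∉ E₂ := by
      intro hmem
      have h13 : 1/3 ≤ t q := hmem.2
      rw [htq] at h13; norm_num at h13
    have hE₁F : E₁ ∉ F := by
      intro hmem
      exact hpE₁ ((hEmin.2 hmem Set.inter_subset_left) hpE)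
    have hE₂F : E₂ ∉ F := by
      intro hmem
      exact hqE₂ ((hEmin.2 hmem Set.inter_subset_left) hqE)
    have hg₁ex : ∃ g ∈ 𝒜, ∀ x ∈ E₁, ‖u x - g x‖ < d := by
      by_contra hco
      push_neg at hco
      exact hE₁F ⟨⟨q, hqE₁⟩, hE₁cl, hco⟩
    have hg₂ex : ∃ g ∈ 𝒜, ∀ x ∈ E₂, ‖u x - g x‖ < d := by
      by_contra hco
      push_neg at hco
      exact hE₂F ⟨⟨p, hpE₂⟩, hE₂cl, hco⟩
    obtain ⟨g₁, hg₁m, hg₁lt⟩ := hg₁ex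
    obtain ⟨g₂, hg₂m, hg₂lt⟩ := hg₂ex
    obtain ⟨z₁, hz₁, hz₁max'⟩ := (hE₁cl.isCompact).exists_isMaxOn ⟨q, hqE₁⟩
      ((u.continuous.sub g₁.continuous).norm.continuousOn)
    obtain ⟨z₂, hz₂, hz₂max'⟩ := (hE₂cl.isCompact).exists_isMaxOn ⟨p, hpE₂⟩
      ((u.continuous.sub g₂.continuous).norm.continuousOn)
    have hz₁max : ∀ x ∈ E₁, ‖u x - g₁ x‖ ≤ ‖u z₁ - g₁ z₁‖ := fun x hx => hz₁max' hx
    have hz₂max : ∀ x ∈ E₂, ‖u x - g₂ x‖ ≤ ‖u z₂ - g₂ z₂‖ := fun x hx => hz₂max' hx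
    have hd1 : ‖u z₁ - g₁ z₁‖ < d := hg₁lt z₁ hz₁
    have hd2 : ‖u z₂ - g₂ z₂‖ < d := hg₂lt z₂ hz₂
    set ε : ℝ := d - max ‖u z₁ - g₁ z₁‖ ‖u z₂ - g₂ z₂‖ with hε
    have hεpos : 0 < ε := by rw [hε]; exact sub_pos.2 (max_lt hd1 hd2)
    have hdε : d - ε = max ‖u z₁ - g₁ z₁‖ ‖u z₂ - g₂ z₂‖ := by rw [hε]; ring
    have hdε0 : 0 ≤ d - ε := by
      rw [hdε]; exact le_trans (norm_nonneg _) (le_max_left _ _)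
    have hA1 : ∀ x ∈ E₁, ‖u x - g₁ x‖ ≤ d - ε := fun x hx => by
      rw [hdε]; exact le_trans (hz₁max x hx) (le_max_left _ _)
    have hA2 : ∀ x ∈ E₂, ‖u x - g₂ x‖ ≤ d - ε := fun x hx => by
      rw [hdε]; exact le_trans (hz₂max x hx) (le_max_right _ _)
    set C : ℝ := max ‖u - g₁‖ ‖u - g₂‖ + 1 with hC
    have hCpos : 0 < C := by
      rw [hC]
      have : (0:ℝ) ≤ max ‖u - g₁‖ ‖u - g₂‖ := le_trans (norm_nonneg _) (le_max_left _ _)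
      linarith
    have hB1 : ∀ x : X, ‖u x - g₁ x‖ ≤ C := by
      intro x
      have h1 : ‖u x - g₁ x‖ ≤ ‖u - g₁‖ := by
        simpa using (u - g₁).norm_coe_le_norm x
      rw [hC]
      have := le_max_left ‖u - g₁‖ ‖u - g₂‖
      linarith
    have hB2 : ∀ x : X, ‖u x - g₂ x‖ ≤ C := by
      intro x
      have h1 : ‖u x - g₂ x‖ ≤ ‖u - g₂‖ := by
        simpa using (u - g₂).norm_coe_le_norm x
      rw [hC]
      have := le_max_right ‖u - g₁‖ ‖u - g₂‖
      linarith
    obtain ⟨n, hn⟩ := exists_pow_lt_of_lt_one (div_pos hεpos hCpos)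
      (by norm_num : (3/4 : ℝ) < 1)
    have hnC : (3/4 : ℝ) ^ n * C < ε := (lt_div_iff₀ hCpos).1 hn
    have hpow0 : (0:ℝ) ≤ (3/4 : ℝ) ^ n := by positivity
    -- the glued function
    set φ : C(X, ℂ) := (1 - k' ^ n) ^ 2 ^ n with hφ
    have hφmem : φ ∈ 𝒜 := pow_mem (sub_mem (one_mem 𝒜) (pow_mem hk'mem n)) _
    set g : C(X, ℂ) := φ * g₁ + (1 - φ) * g₂ with hg
    have hgmem : g ∈ 𝒜 :=
      add_mem (mul_mem hφmem hg₁m) (mul_mem (sub_mem (one_mem 𝒜) hφmem) hg₂m)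
    have hφE : ∀ x ∈ E, φ x = (((1 - (t x) ^ n) ^ 2 ^ n : ℝ) : ℂ) := by
      intro x hx
      have h1 : φ x = (1 - (k' x) ^ n) ^ 2 ^ n := by simp [hφ]
      rw [h1, hk'E x hx]
      push_cast
      ring
    have hmain : ∀ x ∈ E, ‖u x - g x‖ < d := by
      intro x hx
      obtain ⟨ht0, ht1⟩ := ht01 x hx
      set r : ℝ := (1 - (t x) ^ n) ^ 2 ^ n with hr
      have htn1 : (t x) ^ n ≤ 1 := pow_le_one₀ ht0 ht1
      have htn0 : 0 ≤ (t x) ^ n := pow_nonneg ht0 n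
      have hr0 : 0 ≤ r := by rw [hr]; exact pow_nonneg (by linarith) _
      have hr1 : r ≤ 1 := by
        rw [hr]; exact pow_le_one₀ (by linarith) (by linarith)
      have hgx : u x - g x =
          ((r : ℝ) : ℂ) * (u x - g₁ x) + (((1 - r : ℝ)) : ℂ) * (u x - g₂ x) := by
        have hgapp : g x = φ x * g₁ x + (1 - φ x) * g₂ x := by simp [hg]
        rw [hgapp, hφE x hx, ← hr]
        push_cast
        ring
      have hnorm : ‖u x - g x‖ ≤ r * ‖u x - g₁ x‖ + (1 - r) * ‖u x - g₂ x‖ := by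
        rw [hgx]
        refine le_trans (norm_add_le _ _) ?_
        rw [norm_mul, norm_mul, Complex.norm_real, Complex.norm_real,
          Real.norm_of_nonneg hr0, Real.norm_of_nonneg (by linarith : (0:ℝ) ≤ 1 - r)]
      rcases le_or_gt (t x) (1/3) with hcase | hcase
      · have hxE₁ : x ∈ E₁ := ⟨hx, by simp only [Set.mem_setOf_eq]; linarith⟩
        have h1r : 1 - r ≤ (3/4 : ℝ) ^ n := by
          rw [hr]; exact bishop_aux_low ht0 hcase n
        have e1 : r * ‖u x - g₁ x‖ ≤ 1 * (d - ε) :=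
          mul_le_mul hr1 (hA1 x hxE₁) (norm_nonneg _) zero_le_one
        have e2 : (1 - r) * ‖u x - g₂ x‖ ≤ (3/4 : ℝ) ^ n * C :=
          mul_le_mul h1r (hB2 x) (norm_nonneg _) hpow0
        linarith [hnorm, e1, e2, hnC]
      rcases le_or_gt (2/3) (t x) with hcase2 | hcase2
      · have hxE₂ : x ∈ E₂ := ⟨hx, by simp only [Set.mem_setOf_eq]; linarith⟩
        have hrs : r ≤ (3/4 : ℝ) ^ n := by
          rw [hr]; exact bishop_aux_high hcase2 ht1 n
        have e1 : r * ‖u x - g₁ x‖ ≤ (3/4 : ℝ) ^ n * C :=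
          mul_le_mul hrs (hB1 x) (norm_nonneg _) hpow0
        have e2 : (1 - r) * ‖u x - g₂ x‖ ≤ 1 * (d - ε) :=
          mul_le_mul (by linarith) (hA2 x hxE₂) (norm_nonneg _) zero_le_one
        linarith [hnorm, e1, e2, hnC]
      · have hxE₁ : x ∈ E₁ := ⟨hx, by simp only [Set.mem_setOf_eq]; linarith⟩
        have hxE₂ : x ∈ E₂ := ⟨hx, by simp only [Set.mem_setOf_eq]; linarith⟩
        have e1 : r * ‖u x - g₁ x‖ ≤ r * (d - ε) :=
          mul_le_mul_of_nonneg_left (hA1 x hxE₁) hr0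
        have e2 : (1 - r) * ‖u x - g₂ x‖ ≤ (1 - r) * (d - ε) :=
          mul_le_mul_of_nonneg_left (hA2 x hxE₂) (by linarith)
        have hsum : r * (d - ε) + (1 - r) * (d - ε) = d - ε := by ring
        linarith [hnorm, e1, e2, hsum, hεpos]
    obtain ⟨x, hxE, hxd⟩ := hEd g hgmem
    exact absurd hxd (not_le.2 (hmain x hxE))
  -- extend E to a maximal set of antisymmetry
  have hzorn : ∃ M, E ⊆ M ∧ Maximal (· ∈ {S : Set X | IsAntisymmetrySet 𝒜 S}) M := by
    apply zorn_subset_nonempty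
    · intro c hcS hc hcne
      refine ⟨⋃₀ c, ?_, fun s hs => Set.subset_sUnion_of_mem hs⟩
      intro v hv hvre x hx y hy
      obtain ⟨s, hsc, hxs⟩ := Set.mem_sUnion.1 hx
      obtain ⟨s', hs'c, hys'⟩ := Set.mem_sUnion.1 hy
      rcases hc.total hsc hs'c with hss | hss
      · exact hcS hs'c v hv (fun z hz => hvre z (Set.mem_sUnion.2 ⟨s', hs'c, hz⟩))
          x (hss hxs) y hys'
      · exact hcS hsc v hv (fun z hz => hvre z (Set.mem_sUnion.2 ⟨s, hsc, hz⟩))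
          x hxs y (hss hys')
    · exact hEanti
  obtain ⟨M, hEM, hM⟩ := hzorn
  have hMmax : IsMaximalAntisymmetrySet 𝒜 M :=
    ⟨hM.1, fun S' hS' hsub => subset_antisymm (hM.2 hS' hsub) hsub⟩
  obtain ⟨v, hvA, hveq⟩ := h M hMmax
  obtain ⟨x, hxE, hxd⟩ := hEd v hvA
  rw [hveq x (hEM hxE)] at hxd
  simp only [sub_self, norm_zero] at hxd
  linarith
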